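/- Define h : [0, ∞) → ℝ by h(t) = t² for 0 ≤ t ≤ 1 and h(t) = 2t − 1 for t ≥ 1. For every pair of jointly distributed random variables (Y, S) taking values in finite sets: χ²(P_{Y,S}, P_Y × P_S) ≥ h( 2 · E_{s∼P_S}[ TV(P_{Y|S=s}, P_Y) ] ), where χ²(P_{Y,S}, P_Y × P_S) is the chi-squared divergence between the joint distribution and the product of the marginals. -/

import Mathlib

open Finset

noncomputable section

variable {𝒴 𝒮 : Type*} [Fintype 𝒴] [Fintype 𝒮]

/-- Total variation distance between two finitely supported distributions on `𝒴`,
`TV(p, q) = (1/2) ∑ y, |p y - q y|`. -/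
def TV (p q : 𝒴 → ℝ) : ℝ := (1 / 2) * ∑ y, |p y - q y|

/-- Marginal distribution of `Y` under the joint `P` of `(Y, S)`. -/
def margY (P : 𝒴 → 𝒮 → ℝ) (y : 𝒴) : ℝ := ∑ s, P y s

/-- Marginal distribution of `S`. -/
def margS (P : 𝒴 → 𝒮 → ℝ) (s : 𝒮) : ℝ := ∑ y, P y s

/-- Conditional distribution of `Y` given `S = s`. -/
def condYS (P : 𝒴 → 𝒮 → ℝ) (s : 𝒮) (y : 𝒴) : ℝ := P y s / margS P s

/-- The function `h(t) = t²` for `t ≤ 1` and `h(t) = 2t - 1` for `t ≥ 1`. -/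
def hfun (t : ℝ) : ℝ := if t ≤ 1 then t ^ 2 else 2 * t - 1

/-- χ²-divergence between the joint distribution `P` of `(Y, S)` and the product of its
marginals, summed over pairs with positive product of marginals. -/
def chiSq (P : 𝒴 → 𝒮 → ℝ) : ℝ :=
  ∑ y, ∑ s,
    if 0 < margY P y * margS P s then
      (P y s - margY P y * margS P s) ^ 2 / (margY P y * margS P s)
    else 0

/-!
Flatten `P` to a distribution `p` on `𝒴 × 𝒮` and compare it with `q = P_Y × P_S`: then
`2 E_S[TV(P_{Y|S}, P_Y)] = ‖p - q‖₁`, and it suffices to show `h(‖p - q‖₁) ≤ χ²(p, q)` for any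
distributions with `p ≪ q`. On `A = {p > q}` and on its complement the excess of one distribution
over the other is the same number `d = TV(p, q)`, so Cauchy–Schwarz on each part gives
`χ²(p, q) ≥ d² / q(A) + d² / q(Aᶜ)`. Minimising the right-hand side subject to
`q(A) + q(Aᶜ) = 1` and `d ≤ q(Aᶜ)` gives `h(2d)`.
-/

lemma sq_sum_le_sum_mul_sum_sq_div {ι R : Type*} [Field R] [LinearOrder R] [IsStrictOrderedRing R]
    (s : Finset ι) {f g : ι → R}
    (hg : ∀ i ∈ s, 0 ≤ g i) (hfg : ∀ i ∈ s, g i = 0 → f i = 0) :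
    (∑ i ∈ s, f i) ^ 2 ≤ (∑ i ∈ s, g i) * ∑ i ∈ s, f i ^ 2 / g i := by
  refine sum_sq_le_sum_mul_sum_of_sq_le_mul s hg (fun i hi => div_nonneg (sq_nonneg _) (hg i hi))
    fun i hi => ?_
  by_cases h : g i = 0
  · simp [h, hfg i hi h]
  · rw [mul_div_cancel₀ _ h]

lemma hfun_two_mul_le_div_add_div {a b d : ℝ} (ha : 0 < a) (hd : 0 < d) (hdb : d ≤ b)
    (hab : a + b = 1) : hfun (2 * d) ≤ d ^ 2 / a + d ^ 2 / b := by
  have hb : 0 < b := hd.trans_le hdb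
  have hsum : d ^ 2 / a + d ^ 2 / b = d ^ 2 / (a * b) := by
    rw [div_add_div _ _ ha.ne' hb.ne']
    congr 1
    linear_combination d ^ 2 * hab
  rw [hsum, le_div_iff₀ (mul_pos ha hb), hfun]
  split_ifs with h
  · have h4ab : 4 * (a * b) ≤ 1 := by nlinarith [sq_nonneg (a - b)]
    nlinarith [mul_le_mul_of_nonneg_left h4ab (sq_nonneg d)]
  · -- `a ≤ 1 - d < 1/2`, so `a * b = a * (1 - a) ≤ d * (1 - d)`
    have hab_le : a * b ≤ d * (1 - d) := by nlinarith
    nlinarith [mul_nonneg hd.le (sq_nonneg (2 * d - 1))]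

theorem hfun_sum_abs_sub_le_sum_sq_div {ι : Type*} [Fintype ι] (p q : ι → ℝ)
    (hp : ∀ i, 0 ≤ p i) (hq : ∀ i, 0 ≤ q i) (hp1 : ∑ i, p i = 1) (hq1 : ∑ i, q i = 1)
    (hqp : ∀ i, q i = 0 → p i = 0) :
    hfun (∑ i, |p i - q i|) ≤ ∑ i, (p i - q i) ^ 2 / q i := by
  classical
  set A := univ.filter fun i => q i < p i
  set d := ∑ i ∈ A, (p i - q i)
  have hd0 : 0 ≤ d := sum_nonneg fun i hi => by simp only [A, mem_filter] at hi; linarith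
  have hcompl : ∑ i ∈ Aᶜ, (q i - p i) = d := by
    have hzero : ∑ i, (p i - q i) = 0 := by rw [sum_sub_distrib, hp1, hq1, sub_self]
    rw [← sum_add_sum_compl A] at hzero
    have hneg : ∑ i ∈ Aᶜ, (q i - p i) = -∑ i ∈ Aᶜ, (p i - q i) := by
      rw [← sum_neg_distrib]; simp only [neg_sub]
    linarith
  have habs : ∑ i, |p i - q i| = 2 * d := by
    rw [← sum_add_sum_compl A, two_mul]
    congr 1
    · exact sum_congr rfl fun i hi => abs_of_pos <| by
        simp only [A, mem_filter] at hi; linarith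
    · rw [← hcompl]
      refine sum_congr rfl fun i hi => ?_
      simp only [A, mem_compl, mem_filter, mem_univ, true_and, not_lt] at hi
      rw [abs_of_nonpos (by linarith), neg_sub]
  set a := ∑ i ∈ A, q i
  set b := ∑ i ∈ Aᶜ, q i
  have hab : a + b = 1 := by rw [sum_add_sum_compl, hq1]
  have hdb : d ≤ b := hcompl ▸ sum_le_sum fun i _ => by linarith [hp i]
  have hpq_zero : ∀ i, q i = 0 → p i - q i = 0 := fun i h => by rw [h, hqp i h, sub_zero]
  have hA := sq_sum_le_sum_mul_sum_sq_div A (fun i _ => hq i) fun i _ => hpq_zero i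
  have hAc := sq_sum_le_sum_mul_sum_sq_div Aᶜ (f := fun i => q i - p i) (fun i _ => hq i)
    fun i _ h => by rw [← neg_sub, hpq_zero i h, neg_zero]
  simp only [hcompl, sub_sq_comm (q _)] at hAc
  rw [habs]
  obtain hd | hd := hd0.eq_or_lt
  · rw [← hd, mul_zero, hfun, if_pos zero_le_one, sq, zero_mul]
    exact sum_nonneg fun i _ => div_nonneg (sq_nonneg _) (hq i)
  have ha : 0 < a := (sum_nonneg fun i _ => hq i).lt_of_ne fun h => by
    rw [← h, zero_mul] at hA; exact (pow_pos hd 2).not_ge hA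
  calc hfun (2 * d) ≤ d ^ 2 / a + d ^ 2 / b := hfun_two_mul_le_div_add_div ha hd hdb hab
    _ ≤ _ := add_le_add ((div_le_iff₀' ha).2 hA) ((div_le_iff₀' (hd.trans_le hdb)).2 hAc)
    _ = _ := sum_add_sum_compl A _

section JointDistribution

variable {P : 𝒴 → 𝒮 → ℝ}

lemma sum_margS : ∑ s, margS P s = ∑ y, ∑ s, P y s := sum_comm

lemma chiSq_eq_sum_div (hY : ∀ y, 0 ≤ margY P y) (hS : ∀ s, 0 ≤ margS P s) :
    chiSq P = ∑ ω : 𝒴 × 𝒮,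
      (P ω.1 ω.2 - margY P ω.1 * margS P ω.2) ^ 2 / (margY P ω.1 * margS P ω.2) := by
  rw [chiSq, Fintype.sum_prod_type]
  refine sum_congr rfl fun y _ => sum_congr rfl fun s _ => ?_
  -- the pairs excluded in `chiSq` have `margY * margS = 0`, where `x / 0 = 0` anyway
  split_ifs with h
  · rfl
  · rw [(not_lt.1 h).antisymm (mul_nonneg (hY y) (hS s)), div_zero]

lemma margS_mul_TV_condYS {s : 𝒮} (hs : 0 < margS P s) :
    margS P s * TV (condYS P s) (margY P) = 1 / 2 * ∑ y, |P y s - margY P y * margS P s| := by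
  rw [TV, mul_left_comm, mul_sum]
  congr 1
  refine sum_congr rfl fun y _ => ?_
  rw [← abs_of_pos hs, ← abs_mul, condYS, mul_sub, mul_div_cancel₀ _ hs.ne', abs_of_pos hs,
    mul_comm (margS P s)]

lemma two_mul_sum_margS_mul_TV_condYS (hS : ∀ s, 0 < margS P s) :
    2 * ∑ s, margS P s * TV (condYS P s) (margY P)
      = ∑ ω : 𝒴 × 𝒮, |P ω.1 ω.2 - margY P ω.1 * margS P ω.2| := by
  simp_rw [margS_mul_TV_condYS (hS _), ← mul_sum, ← mul_assoc]
  rw [Fintype.sum_prod_type, sum_comm]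
  norm_num

end JointDistribution

/-- **Lemma 2 (Pinsker's inequality for the χ²-divergence-based f-mutual-information).**
For every pair of jointly distributed random variables `(Y, S)` on finite sets,
`χ²(P_{Y,S}, P_Y × P_S) ≥ h(2 E_{s∼P_S}[TV(P_{Y|S=s}, P_Y)])`. -/
theorem chiSq_ge_hfun_expected_tv
    (P : 𝒴 → 𝒮 → ℝ)
    (hP0 : ∀ y s, 0 ≤ P y s)
    (hP1 : ∑ y, ∑ s, P y s = 1)
    (hS : ∀ s, 0 < margS P s) :
    chiSq P ≥ hfun (2 * ∑ s, margS P s * TV (condYS P s) (margY P)) := by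
  have hY : ∀ y, 0 ≤ margY P y := fun y => sum_nonneg fun s _ => hP0 y s
  rw [ge_iff_le, two_mul_sum_margS_mul_TV_condYS hS, chiSq_eq_sum_div hY fun s => (hS s).le]
  refine hfun_sum_abs_sub_le_sum_sq_div _ _ (fun ω => hP0 ω.1 ω.2)
    (fun ω => mul_nonneg (hY ω.1) (hS ω.2).le) ?_ ?_ ?_
  · rwa [Fintype.sum_prod_type]
  · rw [Fintype.sum_prod_type, ← sum_mul_sum, sum_margS, hP1, mul_one]
    exact hP1
  · rintro ⟨y, s⟩ h
    have hy : margY P y = 0 := (mul_eq_zero.1 h).resolve_right (hS s).ne'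
    exact (sum_eq_zero_iff_of_nonneg fun s _ => hP0 y s).1 hy s (mem_univ s)
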